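/- arXiv:1904.12455 — 3 statements merged into one kernel-verified Lean document; each statement's English description precedes it below -/
import Mathlib

section
/- Let α ≠ 0 be real with α ≤ 1/9, and θ ∈ (0, π) with cos θ ≠ 0. Define ζ(θ) = (−4αcos²θ − α + 1 + √Δ(θ))/(4αcos θ), where Δ(θ) = 16α²cos⁴θ − 8α²cos²θ − 8αcos²θ + α² − 2α + 1. Then |ζ(θ)| > 1. -/
set_option maxHeartbeats 1000000


theorem stmt4 (α : ℝ) (hα0 : α ≠ 0) (hα : α ≤ 1/9) (θ : ℝ)
    (hθ : θ ∈ Set.Ioo 0 Real.pi) (hc : Real.cos θ ≠ 0) :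
    1 < |(-4*α*(Real.cos θ)^2 - α + 1 +
        Real.sqrt (16*α^2*(Real.cos θ)^4 - 8*α^2*(Real.cos θ)^2 - 8*α*(Real.cos θ)^2
          + α^2 - 2*α + 1)) / (4*α*(Real.cos θ))| := by
  obtain ⟨h1, h2⟩ := hθ
  set c := Real.cos θ with hcdef
  have hsin : 0 < Real.sin θ := Real.sin_pos_of_pos_of_lt_pi h1 h2
  have hc2 : c^2 < 1 := by nlinarith [Real.sin_sq_add_cos_sq θ]
  -- factor positivity
  have hf1 : 0 < 1 - α*(1+2*c)^2 := by
    rcases le_or_gt α 0 with h | h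
    · nlinarith [sq_nonneg (1+2*c)]
    · nlinarith [sq_nonneg (1+2*c), sq_nonneg (1-c), sq_nonneg (1+c)]
  have hf2 : 0 < 1 - α*(1-2*c)^2 := by
    rcases le_or_gt α 0 with h | h
    · nlinarith [sq_nonneg (1-2*c)]
    · nlinarith [sq_nonneg (1-2*c), sq_nonneg (1-c), sq_nonneg (1+c)]
  set Δ : ℝ := 16*α^2*c^4 - 8*α^2*c^2 - 8*α*c^2 + α^2 - 2*α + 1 with hΔdef
  have hΔ : 0 < Δ := by
    have : Δ = (1 - α*(1+2*c)^2) * (1 - α*(1-2*c)^2) := by ring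
    rw [this]; exact mul_pos hf1 hf2
  set A : ℝ := -4*α*c^2 - α + 1 with hAdef
  have hA : 0 < A := by
    rcases le_or_gt α 0 with h | h
    · nlinarith [sq_nonneg c]
    · nlinarith [sq_nonneg c]
  set s := Real.sqrt Δ with hsdef
  have hs2 : s^2 = Δ := Real.sq_sqrt hΔ.le
  have hs0 : 0 < s := Real.sqrt_pos.mpr hΔ
  have hd0 : (4*α*c) ≠ 0 := by
    intro h; rcases mul_eq_zero.mp h with h' | h'
    · rcases mul_eq_zero.mp h' with h'' | h''
      · norm_num at h''
      · exact hα0 h''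
    · exact hc h'
  have hdsq : 0 < (4*α*c)^2 := by positivity
  have hΔeq : Δ = A^2 - (4*α*c)^2 := by rw [hΔdef, hAdef]; ring
  -- s < A
  have hsA : s < A := by nlinarith
  -- |4αc| < A + s
  have hkey : |4*α*c| < A + s := by
    have hsq : (4*α*c)^2 < (A + s)^2 := by nlinarith
    have habs : |4*α*c| < |A + s| := by
      nlinarith [sq_abs (4*α*c), sq_abs (A+s), abs_nonneg (4*α*c), abs_nonneg (A+s)]
    calc |4*α*c| < |A + s| := habs
      _ = A + s := abs_of_pos (by linarith)
  have hAs : 0 < A + s := by linarith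
  rw [abs_div]
  rw [lt_div_iff₀ (abs_pos.mpr hd0), one_mul]
  rw [abs_of_pos hAs]
  exact hkey
end

section
/- Let 0 < α ≤ 1/9 and θ ∈ (0, π) with cos θ ≠ 0. With Δ(θ) = 16α²cos⁴θ − 8α²cos²θ − 8αcos²θ + α² − 2α + 1 and ζ(θ) = (−4αcos²θ − α + 1 + √Δ(θ))/(4αcosθ), the quantity (2cosθ + ζ(θ))/ζ(θ) = (4αcos²θ − α + 1 + √Δ(θ))/(−4αcos²θ − α + 1 + √Δ(θ)) is strictly positive. -/
theorem add_div_div_div_self {K : Type*} [DivisionRing K] (a b : K) {k : K} (hk : k ≠ 0) :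
    (a + b / k) / (b / k) = (a * k + b) / b := by
  rw [add_div' _ _ _ hk, div_div_div_cancel_right₀ hk]

theorem stmt6_general (α : ℝ) (hα0 : 0 < α) (hα : α ≤ 1/9) (θ : ℝ)
    (hc : Real.cos θ ≠ 0) :
    (2*Real.cos θ +
        (-4*α*(Real.cos θ)^2 - α + 1 +
          Real.sqrt (16*α^2*(Real.cos θ)^4 - 8*α^2*(Real.cos θ)^2 - 8*α*(Real.cos θ)^2
            + α^2 - 2*α + 1)) / (4*α*(Real.cos θ))) /
      ((-4*α*(Real.cos θ)^2 - α + 1 +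
          Real.sqrt (16*α^2*(Real.cos θ)^4 - 8*α^2*(Real.cos θ)^2 - 8*α*(Real.cos θ)^2
            + α^2 - 2*α + 1)) / (4*α*(Real.cos θ)))
    = (4*α*(Real.cos θ)^2 - α + 1 +
          Real.sqrt (16*α^2*(Real.cos θ)^4 - 8*α^2*(Real.cos θ)^2 - 8*α*(Real.cos θ)^2
            + α^2 - 2*α + 1)) /
      (-4*α*(Real.cos θ)^2 - α + 1 +
          Real.sqrt (16*α^2*(Real.cos θ)^4 - 8*α^2*(Real.cos θ)^2 - 8*α*(Real.cos θ)^2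
            + α^2 - 2*α + 1)) ∧
    0 < (4*α*(Real.cos θ)^2 - α + 1 +
          Real.sqrt (16*α^2*(Real.cos θ)^4 - 8*α^2*(Real.cos θ)^2 - 8*α*(Real.cos θ)^2
            + α^2 - 2*α + 1)) /
      (-4*α*(Real.cos θ)^2 - α + 1 +
          Real.sqrt (16*α^2*(Real.cos θ)^4 - 8*α^2*(Real.cos θ)^2 - 8*α*(Real.cos θ)^2
            + α^2 - 2*α + 1)) := by
  set c := Real.cos θ
  set s := Real.sqrt (16*α^2*c^4 - 8*α^2*c^2 - 8*α*c^2 + α^2 - 2*α + 1)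
  have hs : 0 ≤ s := Real.sqrt_nonneg _
  have hαc : 0 ≤ α * c^2 := by positivity
  have hαc_le : α * c^2 ≤ α := mul_le_of_le_one_right hα0.le (Real.cos_sq_le_one θ)
  -- 1 - α - 4αc² ≥ 1 - 5α > 0
  have hden : 0 < -4*α*c^2 - α + 1 + s := by linarith
  have hnum : 0 < 4*α*c^2 - α + 1 + s := by linarith
  refine ⟨?_, div_pos hnum hden⟩
  rw [add_div_div_div_self _ _ (by positivity : 4*α*c ≠ 0)]
  congr 1
  ring

theorem stmt6 (α : ℝ) (hα0 : 0 < α) (hα : α ≤ 1/9) (θ : ℝ)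
    (hθ : θ ∈ Set.Ioo 0 Real.pi) (hc : Real.cos θ ≠ 0) :
    (2*Real.cos θ +
        (-4*α*(Real.cos θ)^2 - α + 1 +
          Real.sqrt (16*α^2*(Real.cos θ)^4 - 8*α^2*(Real.cos θ)^2 - 8*α*(Real.cos θ)^2
            + α^2 - 2*α + 1)) / (4*α*(Real.cos θ))) /
      ((-4*α*(Real.cos θ)^2 - α + 1 +
          Real.sqrt (16*α^2*(Real.cos θ)^4 - 8*α^2*(Real.cos θ)^2 - 8*α*(Real.cos θ)^2
            + α^2 - 2*α + 1)) / (4*α*(Real.cos θ)))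
    = (4*α*(Real.cos θ)^2 - α + 1 +
          Real.sqrt (16*α^2*(Real.cos θ)^4 - 8*α^2*(Real.cos θ)^2 - 8*α*(Real.cos θ)^2
            + α^2 - 2*α + 1)) /
      (-4*α*(Real.cos θ)^2 - α + 1 +
          Real.sqrt (16*α^2*(Real.cos θ)^4 - 8*α^2*(Real.cos θ)^2 - 8*α*(Real.cos θ)^2
            + α^2 - 2*α + 1)) ∧
    0 < (4*α*(Real.cos θ)^2 - α + 1 +
          Real.sqrt (16*α^2*(Real.cos θ)^4 - 8*α^2*(Real.cos θ)^2 - 8*α*(Real.cos θ)^2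
            + α^2 - 2*α + 1)) /
      (-4*α*(Real.cos θ)^2 - α + 1 +
          Real.sqrt (16*α^2*(Real.cos θ)^4 - 8*α^2*(Real.cos θ)^2 - 8*α*(Real.cos θ)^2
            + α^2 - 2*α + 1)) :=
  stmt6_general α hα0 hα θ hc
end

section
/- Let τ, ζ, θ be real with τ ≠ 0, ζ ≠ 0, sin θ ≠ 0, and let α ≠ 0. Set t₁ = τe^{−iθ}, t₂ = τe^{iθ}, t₃ = τζ, and z = −1/(ατ³ζ). If τ² = (2cosθ + ζ)/ζ and τ²(1 + 2ζcosθ) = 1/α, then t₁, t₂, t₃ are exactly the three roots of the cubic αz·t³ + t² + z·t + 1 = 0. -/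
/-! The two non-real factors multiply to the real quadratic `t² - 2τ cos θ · t + τ²`, so the claim
reduces to a factorisation of a cubic over any field, in which the two hypotheses are exactly the
conditions on the coefficients of `t²` and of `t`. -/

namespace Complex

theorem sub_mul_exp_neg_mul_sub_mul_exp (r x t : ℂ) :
    (t - r * exp (-I * x)) * (t - r * exp (I * x)) = t ^ 2 - 2 * r * cos x * t + r ^ 2 := by
  have hsum : exp (I * x) + exp (-I * x) = 2 * cos x := by
    rw [two_cos, neg_mul, neg_mul, mul_comm I]
  have hprod : exp (-I * x) * exp (I * x) = 1 := by
    rw [← exp_add, neg_mul, neg_add_cancel, exp_zero]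
  linear_combination (-r * t) * hsum + r ^ 2 * hprod

end Complex

theorem cubic_eq_mul_mul_sub_of_coeff_eq {K : Type*} [Field K] {a τ ζ c : K} (ha : a ≠ 0)
    (hτ : τ ≠ 0) (hζ : ζ ≠ 0) (h1 : τ ^ 2 * ζ = 2 * c + ζ) (h2 : a * τ ^ 2 * (1 + 2 * ζ * c) = 1)
    (t : K) :
    a * (-1 / (a * τ ^ 3 * ζ)) * t ^ 3 + t ^ 2 + (-1 / (a * τ ^ 3 * ζ)) * t + 1
      = a * (-1 / (a * τ ^ 3 * ζ)) * (t ^ 2 - 2 * τ * c * t + τ ^ 2) * (t - τ * ζ) := by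
  field_simp
  linear_combination (a * τ * t ^ 2) * h1 + t * h2

open Complex in
theorem stmt10_general (α τ ζ θ : ℝ) (hα : α ≠ 0) (hτ : τ ≠ 0) (hζ : ζ ≠ 0)
    (h1 : τ^2 * ζ = 2*Real.cos θ + ζ)
    (h2 : α * τ^2 * (1 + 2*ζ*Real.cos θ) = 1) :
    ∀ t : ℂ,
      (α : ℂ) * (-1/((α:ℂ)*(τ:ℂ)^3*(ζ:ℂ))) * t^3 + t^2
        + (-1/((α:ℂ)*(τ:ℂ)^3*(ζ:ℂ))) * t + 1
      = (α : ℂ) * (-1/((α:ℂ)*(τ:ℂ)^3*(ζ:ℂ)))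
        * (t - (τ:ℂ) * Complex.exp (-Complex.I * θ))
        * (t - (τ:ℂ) * Complex.exp (Complex.I * θ))
        * (t - (τ:ℂ) * (ζ:ℂ)) := by
  intro t
  rw [mul_assoc _ _ (t - τ * exp (I * θ)), sub_mul_exp_neg_mul_sub_mul_exp, ← ofReal_cos]
  exact cubic_eq_mul_mul_sub_of_coeff_eq (ofReal_ne_zero.mpr hα) (ofReal_ne_zero.mpr hτ)
    (ofReal_ne_zero.mpr hζ) (mod_cast h1) (mod_cast h2) t

open Complex in
theorem stmt10 (α τ ζ θ : ℝ) (hα : α ≠ 0) (hτ : τ ≠ 0) (hζ : ζ ≠ 0)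
    (hs : Real.sin θ ≠ 0)
    (h1 : τ^2 * ζ = 2*Real.cos θ + ζ)
    (h2 : α * τ^2 * (1 + 2*ζ*Real.cos θ) = 1) :
    ∀ t : ℂ,
      (α : ℂ) * (-1/((α:ℂ)*(τ:ℂ)^3*(ζ:ℂ))) * t^3 + t^2
        + (-1/((α:ℂ)*(τ:ℂ)^3*(ζ:ℂ))) * t + 1
      = (α : ℂ) * (-1/((α:ℂ)*(τ:ℂ)^3*(ζ:ℂ)))
        * (t - (τ:ℂ) * Complex.exp (-Complex.I * θ))
        * (t - (τ:ℂ) * Complex.exp (Complex.I * θ))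
        * (t - (τ:ℂ) * (ζ:ℂ)) :=
  stmt10_general α τ ζ θ hα hτ hζ h1 h2
end
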